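/- arXiv:2306.08594 — 2 statements merged into one kernel-verified Lean document; each statement's English description precedes it below -/
import Mathlib

section
/- Let G be a strongly connected directed graph with all distances between distinct vertices at most 2, and let V1, V2 ⊆ V(G) be disjoint nonempty vertex sets such that for every x ∈ V1 and y ∈ V2 both (x,y) ∈ E(G) and (y,x) ∈ E(G). Let R1 ⊆ V1 resolve V1 in G and R2 ⊆ V2 resolve V2 in G, both nonempty. If V1 has no 1-vertex w.r.t. R1 or V2 has no 1-vertex w.r.t. R2, then R1 ∪ R2 resolves V1 ∪ V2 in G. -/
universe u

/-- There is a directed walk of length `n` from `u` to `v` in the digraph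
with edge relation `E`. -/
def HasWalkLen {V : Type u} (E : V → V → Prop) (u v : V) (n : ℕ) : Prop :=
  ∃ f : Fin (n + 1) → V, f 0 = u ∧ f (Fin.last n) = v ∧
    ∀ i : Fin n, E (f i.castSucc) (f i.succ)

/-- `v` is reachable from `u` by a directed walk. -/
def Reaches {V : Type u} (E : V → V → Prop) (u v : V) : Prop :=
  ∃ n, HasWalkLen E u v n

/-- Directed distance from `u` to `v` (length of a shortest directed path);
a junk value (`sInf ∅ = 0`) if `v` is unreachable from `u`. -/
noncomputable def ddist {V : Type u} (E : V → V → Prop) (u v : V) : ℕ :=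
  sInf {n | HasWalkLen E u v n}

/-- `w` resolves the vertices `u` and `v`: `w = u`, or `w = v`, or both
distances from `w` are defined (reachable) and different. -/
def Resolves {V : Type u} (E : V → V → Prop) (w u v : V) : Prop :=
  w = u ∨ w = v ∨
    (Reaches E w u ∧ Reaches E w v ∧ ddist E w u ≠ ddist E w v)

/-- `R` resolves the vertex set `U`: every pair of distinct vertices of `U`
is resolved by some member of `R`. -/
def ResolvesSet {V : Type u} (E : V → V → Prop) (R U : Set V) : Prop :=
  ∀ u ∈ U, ∀ v ∈ U, u ≠ v → ∃ w ∈ R, Resolves E w u v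

/-- The digraph is strongly connected on the vertex set `S`. -/
def SConn {V : Type u} (E : V → V → Prop) (S : Set V) : Prop :=
  ∀ u ∈ S, ∀ v ∈ S, Reaches E u v

/-- `u` is a 1-vertex w.r.t. `R`: `u ∉ R` and every `w ∈ R` has an edge to `u`. -/
def OneVertex {V : Type u} (E : V → V → Prop) (R : Set V) (u : V) : Prop :=
  u ∉ R ∧ ∀ w ∈ R, E w u

/-- `u` is a 2-vertex w.r.t. `R`: `u ∉ R` and no `w ∈ R` has an edge to `u`. -/
def TwoVertex {V : Type u} (E : V → V → Prop) (R : Set V) (u : V) : Prop :=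
  u ∉ R ∧ ∀ w ∈ R, ¬ E w u

/-- Directed co-graphs with vertex set `S` and edge relation `E`, built
inductively from single vertices by disjoint union, join and directed join. -/
inductive IsDicograph {V : Type u} : Set V → (V → V → Prop) → Prop
  | single (v : V) : IsDicograph {v} fun _ _ => False
  | disjUnion {S₁ S₂ : Set V} {E₁ E₂ : V → V → Prop} :
      IsDicograph S₁ E₁ → IsDicograph S₂ E₂ → Disjoint S₁ S₂ →
      IsDicograph (S₁ ∪ S₂) fun u v => E₁ u v ∨ E₂ u v
  | join {S₁ S₂ : Set V} {E₁ E₂ : V → V → Prop} :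
      IsDicograph S₁ E₁ → IsDicograph S₂ E₂ → Disjoint S₁ S₂ →
      IsDicograph (S₁ ∪ S₂) fun u v =>
        E₁ u v ∨ E₂ u v ∨ (u ∈ S₁ ∧ v ∈ S₂) ∨ (u ∈ S₂ ∧ v ∈ S₁)
  | dirJoin {S₁ S₂ : Set V} {E₁ E₂ : V → V → Prop} :
      IsDicograph S₁ E₁ → IsDicograph S₂ E₂ → Disjoint S₁ S₂ →
      IsDicograph (S₁ ∪ S₂) fun u v => E₁ u v ∨ E₂ u v ∨ (u ∈ S₁ ∧ v ∈ S₂)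

/- A vertex `w ∈ R` that misses `u` but hits `v` sees them at distances 2 and 1, since the
diameter is at most 2; inside the join every vertex of `R₁ ⊆ V₁` hits every vertex of `V₂`,
so a pair `u ∈ V₁`, `v ∈ V₂` is resolved as soon as `u` is not a 1-vertex w.r.t. `R₁`
(symmetrically for `V₂`), while pairs inside `V₁` or `V₂` are resolved by `R₁` or `R₂`. -/

namespace HasWalkLen

variable {V : Type u} {E : V → V → Prop} {w v : V}

lemma of_adj (h : E w v) : HasWalkLen E w v 1 := by
  refine ⟨![w, v], rfl, rfl, fun i => ?_⟩
  fin_cases i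
  exact h

lemma eq_of_zero (h : HasWalkLen E w v 0) : w = v := by
  obtain ⟨f, h0, hl, -⟩ := h
  rw [← h0, ← hl]
  rfl

lemma adj_of_one (h : HasWalkLen E w v 1) : E w v := by
  obtain ⟨f, h0, hl, he⟩ := h
  rw [← h0, ← hl]
  exact he 0

end HasWalkLen

section Distance

variable {V : Type u} {E : V → V → Prop} {w v : V}

lemma hasWalkLen_ddist (hr : Reaches E w v) : HasWalkLen E w v (ddist E w v) :=
  Nat.sInf_mem hr

lemma ddist_ne_zero (hne : w ≠ v) (hr : Reaches E w v) : ddist E w v ≠ 0 := fun h0 =>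
  hne (HasWalkLen.eq_of_zero (h0 ▸ hasWalkLen_ddist hr))

lemma ddist_eq_one_of_adj (hne : w ≠ v) (h : E w v) : ddist E w v = 1 := by
  have hle : ddist E w v ≤ 1 := Nat.sInf_le (HasWalkLen.of_adj h)
  have := ddist_ne_zero hne ⟨1, HasWalkLen.of_adj h⟩
  omega

lemma ddist_eq_two_of_not_adj (hne : w ≠ v) (h : ¬ E w v) (hr : Reaches E w v)
    (hd : ddist E w v ≤ 2) : ddist E w v = 2 := by
  have h1 : ddist E w v ≠ 1 := fun h1 => h (HasWalkLen.adj_of_one (h1 ▸ hasWalkLen_ddist hr))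
  have := ddist_ne_zero hne hr
  omega

end Distance

section Resolving

variable {V : Type u} {E : V → V → Prop}

lemma Resolves.symm {w u v : V} (h : Resolves E w u v) : Resolves E w v u := by
  rcases h with h | h | ⟨hu, hv, hne⟩
  · exact Or.inr (Or.inl h)
  · exact Or.inl h
  · exact Or.inr (Or.inr ⟨hv, hu, hne.symm⟩)

lemma ResolvesSet.union {R₁ R₂ U₁ U₂ : Set V}
    (h₁ : ResolvesSet E R₁ U₁) (h₂ : ResolvesSet E R₂ U₂)
    (hcross : ∀ u ∈ U₁, ∀ v ∈ U₂, ∃ w ∈ R₁ ∪ R₂, Resolves E w u v) :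
    ResolvesSet E (R₁ ∪ R₂) (U₁ ∪ U₂) := by
  rintro u (hu | hu) v (hv | hv) huv
  · obtain ⟨w, hw, hres⟩ := h₁ u hu v hv huv
    exact ⟨w, Or.inl hw, hres⟩
  · exact hcross u hu v hv
  · obtain ⟨w, hw, hres⟩ := hcross v hv u hu
    exact ⟨w, hw, hres.symm⟩
  · obtain ⟨w, hw, hres⟩ := h₂ u hu v hv huv
    exact ⟨w, Or.inr hw, hres⟩

lemma exists_resolves_of_not_oneVertex (hsc : SConn E Set.univ)
    (hdiam : ∀ u v : V, u ≠ v → ddist E u v ≤ 2) {R : Set V} {u v : V}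
    (hu : ¬ OneVertex E R u) (hv : v ∉ R) (hRv : ∀ w ∈ R, E w v) :
    ∃ w ∈ R, Resolves E w u v := by
  by_cases huR : u ∈ R
  · exact ⟨u, huR, Or.inl rfl⟩
  obtain ⟨w, hwR, hwu⟩ : ∃ w ∈ R, ¬ E w u := by
    simpa [OneVertex, huR] using hu
  have hwu' : w ≠ u := fun h => huR (h ▸ hwR)
  have hwv : w ≠ v := fun h => hv (h ▸ hwR)
  have hu2 := ddist_eq_two_of_not_adj hwu' hwu (hsc w trivial u trivial) (hdiam w u hwu')
  have hv1 := ddist_eq_one_of_adj hwv (hRv w hwR)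
  refine ⟨w, hwR, Or.inr (Or.inr ⟨hsc w trivial u trivial, hsc w trivial v trivial, ?_⟩)⟩
  omega

end Resolving

theorem stmt_6_general {V : Type u} {E : V → V → Prop}
    (hsc : SConn E Set.univ)
    (hdiam : ∀ u v : V, u ≠ v → ddist E u v ≤ 2)
    {V₁ V₂ R₁ R₂ : Set V}
    (hdisj : Disjoint V₁ V₂)
    (hedge : ∀ x ∈ V₁, ∀ y ∈ V₂, E x y ∧ E y x)
    (hR₁ : R₁ ⊆ V₁) (hR₂ : R₂ ⊆ V₂)
    (hres₁ : ResolvesSet E R₁ V₁) (hres₂ : ResolvesSet E R₂ V₂)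
    (h1v : (¬ ∃ u ∈ V₁, OneVertex E R₁ u) ∨ (¬ ∃ u ∈ V₂, OneVertex E R₂ u)) :
    ResolvesSet E (R₁ ∪ R₂) (V₁ ∪ V₂) := by
  refine hres₁.union hres₂ fun u hu v hv => ?_
  rcases h1v with h1 | h2
  · have hvR : v ∉ R₁ := fun h => hdisj.ne_of_mem (hR₁ h) hv rfl
    obtain ⟨w, hw, hres⟩ := exists_resolves_of_not_oneVertex hsc hdiam
      (fun h => h1 ⟨u, hu, h⟩) hvR fun w hw => (hedge w (hR₁ hw) v hv).1
    exact ⟨w, Or.inl hw, hres⟩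
  · have huR : u ∉ R₂ := fun h => hdisj.ne_of_mem hu (hR₂ h) rfl
    obtain ⟨w, hw, hres⟩ := exists_resolves_of_not_oneVertex hsc hdiam
      (fun h => h2 ⟨v, hv, h⟩) huR fun w hw => (hedge u hu w (hR₂ hw)).2
    exact ⟨w, Or.inr hw, hres.symm⟩

/-- Join case: if one side has no 1-vertex, the union of the two resolving
sets resolves the union of the two vertex sets. -/
theorem stmt_6 {V : Type u} {E : V → V → Prop}
    (hsc : SConn E Set.univ)
    (hdiam : ∀ u v : V, u ≠ v → ddist E u v ≤ 2)
    {V₁ V₂ R₁ R₂ : Set V}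
    (hdisj : Disjoint V₁ V₂) (hV₁ : V₁.Nonempty) (hV₂ : V₂.Nonempty)
    (hedge : ∀ x ∈ V₁, ∀ y ∈ V₂, E x y ∧ E y x)
    (hR₁ : R₁ ⊆ V₁) (hR₂ : R₂ ⊆ V₂)
    (hR₁ne : R₁.Nonempty) (hR₂ne : R₂.Nonempty)
    (hres₁ : ResolvesSet E R₁ V₁) (hres₂ : ResolvesSet E R₂ V₂)
    (h1v : (¬ ∃ u ∈ V₁, OneVertex E R₁ u) ∨ (¬ ∃ u ∈ V₂, OneVertex E R₂ u)) :
    ResolvesSet E (R₁ ∪ R₂) (V₁ ∪ V₂) :=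
  stmt_6_general hsc hdiam hdisj hedge hR₁ hR₂ hres₁ hres₂ h1v
end

section
/- Let G be a strongly connected directed co-graph, U ⊆ V(G), and R ⊆ U a set that resolves U in G. Suppose u1 ∈ U \ R is a 1-vertex w.r.t. R and u2 ∈ U \ R is a 2-vertex w.r.t. R. Then there is no vertex v ∈ U \ (R ∪ {u1, u2}) such that simultaneously (v,u1) ∉ E(G) and (v,u2) ∈ E(G), i.e., no third vertex v whose addition to R makes u1 fail to be a 1-vertex and u2 fail to be a 2-vertex w.r.t. R ∪ {v}. -/
universe u

/-! In a directed co-graph, a vertex `b ≠ a` reachable from `a` is at distance 1 or 2, so a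
vertex `w ∉ {u, v}` resolves `u` and `v` exactly when it has an arc to one of them and not to the
other. Resolving `(u₁, v)` and `(u₂, v)` by members `w₁, w₂` of `R` forces `w₁ ↛ v` and `w₂ → v`;
with the 1- and 2-vertex conditions this is a five-vertex configuration that no dicograph contains,
since a composition either keeps it inside one part or contradicts its uniform arcs between the
parts. -/

open Relation

section Walks

variable {V : Type u} {E : V → V → Prop} {a b : V}

theorem hasWalkLen_zero_iff : HasWalkLen E a b 0 ↔ a = b := by
  constructor
  · rintro ⟨f, rfl, rfl, -⟩
    rfl
  · rintro rfl
    exact ⟨fun _ => a, rfl, rfl, fun i => i.elim0⟩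

theorem hasWalkLen_one_iff : HasWalkLen E a b 1 ↔ E a b := by
  constructor
  · rintro ⟨f, rfl, rfl, h⟩
    exact h 0
  · intro h
    exact ⟨![a, b], rfl, rfl, fun i => by fin_cases i; exact h⟩

theorem hasWalkLen_two {x : V} (hax : E a x) (hxb : E x b) : HasWalkLen E a b 2 :=
  ⟨![a, x, b], rfl, rfl, fun i => by fin_cases i <;> assumption⟩

theorem HasWalkLen.reflTransGen : ∀ {n : ℕ} {a b : V}, HasWalkLen E a b n → ReflTransGen E a b
  | 0, _, _, h => hasWalkLen_zero_iff.1 h ▸ .refl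
  | _ + 1, _, _, ⟨f, rfl, rfl, h⟩ =>
    .head (h 0) (HasWalkLen.reflTransGen ⟨fun i => f i.succ, rfl, rfl, fun i => h i.succ⟩)

theorem ddist_eq_of_hasWalkLen {n : ℕ} (h : HasWalkLen E a b n)
    (hmin : ∀ m < n, ¬ HasWalkLen E a b m) : ddist E a b = n :=
  le_antisymm (Nat.sInf_le h) (le_csInf ⟨n, h⟩ fun _ hm => not_lt.1 fun hlt => hmin _ hlt hm)

theorem ddist_eq_one (hab : a ≠ b) (h : E a b) : ddist E a b = 1 :=
  ddist_eq_of_hasWalkLen (hasWalkLen_one_iff.2 h) fun m hm => by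
    obtain rfl : m = 0 := by omega
    exact mt hasWalkLen_zero_iff.1 hab

theorem ddist_eq_two {x : V} (hab : a ≠ b) (h : ¬ E a b) (hax : E a x) (hxb : E x b) :
    ddist E a b = 2 :=
  ddist_eq_of_hasWalkLen (hasWalkLen_two hax hxb) fun m hm => by
    interval_cases m
    · exact mt hasWalkLen_zero_iff.1 hab
    · exact mt hasWalkLen_one_iff.1 h

end Walks

theorem Relation.ReflTransGen.of_forall_mem {α : Type*} {r r' : α → α → Prop} {T : Set α}
    {a b : α} (hT : ∀ x ∈ T, ∀ y, r x y → r' x y ∧ y ∈ T) (h : ReflTransGen r a b)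
    (ha : a ∈ T) : ReflTransGen r' a b ∧ b ∈ T := by
  induction h with
  | refl => exact ⟨.refl, ha⟩
  | tail _ hbc ih =>
    obtain ⟨h', hb⟩ := ih
    obtain ⟨e, hc⟩ := hT _ hb _ hbc
    exact ⟨h'.tail e, hc⟩

/-- Disjoint union, join and directed join, as the cases `(p, q) = (False, False)`,
`(True, True)` and `(True, False)`. -/
def composeRel {V : Type u} (S₁ S₂ : Set V) (E₁ E₂ : V → V → Prop) (p q : Prop) (a b : V) :
    Prop :=
  E₁ a b ∨ E₂ a b ∨ (p ∧ a ∈ S₁ ∧ b ∈ S₂) ∨ (q ∧ a ∈ S₂ ∧ b ∈ S₁)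

section composeRel

variable {V : Type u} {S₁ S₂ : Set V} {E₁ E₂ : V → V → Prop} {p q : Prop} {a b : V}

theorem composeRel_comm :
    composeRel S₁ S₂ E₁ E₂ p q = composeRel S₂ S₁ E₂ E₁ q p := by
  ext a b
  simp only [composeRel]
  tauto

theorem mem_union_of_composeRel (h₁ : ∀ {a b}, E₁ a b → a ∈ S₁ ∧ b ∈ S₁)
    (h₂ : ∀ {a b}, E₂ a b → a ∈ S₂ ∧ b ∈ S₂) (hab : composeRel S₁ S₂ E₁ E₂ p q a b) :
    a ∈ S₁ ∪ S₂ ∧ b ∈ S₁ ∪ S₂ := by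
  rcases hab with hab | hab | ⟨-, ha, hb⟩ | ⟨-, ha, hb⟩
  · exact ⟨.inl (h₁ hab).1, .inl (h₁ hab).2⟩
  · exact ⟨.inr (h₂ hab).1, .inr (h₂ hab).2⟩
  · exact ⟨.inl ha, .inr hb⟩
  · exact ⟨.inr ha, .inl hb⟩

end composeRel

def ForbiddenConfig {V : Type u} (E : V → V → Prop) (w₁ w₂ u₁ u₂ v : V) : Prop :=
  E w₁ u₁ ∧ E w₂ u₁ ∧ E w₂ v ∧ E v u₂ ∧ ¬ E w₁ u₂ ∧ ¬ E w₂ u₂ ∧ ¬ E w₁ v ∧ ¬ E v u₁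

/-- If `q`, the non-edges `w₁u₂, w₂u₂, w₁v, vu₁` join all five vertices inside one part; if `¬ p`,
the edges do. If `p ∧ ¬ q`, all arcs between the parts go from `S₁` to `S₂`, and the part of `u₂`
propagates along `v → u₂`, `w₁ ↛ u₂`, `w₂ ↛ u₂` and then to the rest. -/
theorem ForbiddenConfig.mem_or_mem {V : Type u} {S₁ S₂ : Set V} {C : V → V → Prop} {p q : Prop}
    (hqp : q → p) (hc₁₂ : ∀ {x y}, x ∈ S₁ → y ∈ S₂ → (C x y ↔ p))
    (hc₂₁ : ∀ {x y}, x ∈ S₂ → y ∈ S₁ → (C x y ↔ q)) {w₁ w₂ u₁ u₂ v : V}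
    (hc : ForbiddenConfig C w₁ w₂ u₁ u₂ v) (hw₁ : w₁ ∈ S₁ ∪ S₂) (hw₂ : w₂ ∈ S₁ ∪ S₂)
    (hu₁ : u₁ ∈ S₁ ∪ S₂) (hu₂ : u₂ ∈ S₁ ∪ S₂) (hv : v ∈ S₁ ∪ S₂) :
    (w₁ ∈ S₁ ∧ w₂ ∈ S₁ ∧ u₁ ∈ S₁ ∧ u₂ ∈ S₁ ∧ v ∈ S₁) ∨
      (w₁ ∈ S₂ ∧ w₂ ∈ S₂ ∧ u₁ ∈ S₂ ∧ u₂ ∈ S₂ ∧ v ∈ S₂) := by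
  simp only [ForbiddenConfig, Set.mem_union] at *
  grind

namespace IsDicograph

variable {V : Type u} {S S₁ S₂ : Set V} {E E₁ E₂ : V → V → Prop} {p q : Prop} {a b : V}

theorem induction_on_composeRel {motive : Set V → (V → V → Prop) → Prop}
    (single : ∀ v, motive {v} fun _ _ => False)
    (compose : ∀ {S₁ S₂ : Set V} {E₁ E₂ : V → V → Prop} {p q : Prop}, (q → p) →
      IsDicograph S₁ E₁ → IsDicograph S₂ E₂ → Disjoint S₁ S₂ → motive S₁ E₁ → motive S₂ E₂ →
      motive (S₁ ∪ S₂) (composeRel S₁ S₂ E₁ E₂ p q))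
    (h : IsDicograph S E) : motive S E := by
  induction h with
  | single v => exact single v
  | disjUnion h₁ h₂ hd ih₁ ih₂ =>
    convert compose (p := False) (q := False) id h₁ h₂ hd ih₁ ih₂ using 1
    ext a b
    simp [composeRel]
  | join h₁ h₂ hd ih₁ ih₂ =>
    convert compose (p := True) (q := True) id h₁ h₂ hd ih₁ ih₂ using 1
    ext a b
    simp [composeRel]
  | dirJoin h₁ h₂ hd ih₁ ih₂ =>
    convert compose (p := True) (q := False) (fun _ => trivial) h₁ h₂ hd ih₁ ih₂ using 1
    ext a b
    simp [composeRel]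

theorem nonempty (h : IsDicograph S E) : S.Nonempty :=
  h.induction_on_composeRel (motive := fun S _ => S.Nonempty) Set.singleton_nonempty
    fun _ _ _ _ ih₁ _ => ih₁.mono Set.subset_union_left

theorem mem_of_adj (h : IsDicograph S E) (hab : E a b) : a ∈ S ∧ b ∈ S :=
  h.induction_on_composeRel (motive := fun S E => ∀ {a b}, E a b → a ∈ S ∧ b ∈ S)
    (fun _ _ _ hab => hab.elim) (fun _ _ _ _ ih₁ ih₂ _ _ => mem_union_of_composeRel ih₁ ih₂) hab

theorem composeRel_iff_left (h₂ : IsDicograph S₂ E₂) (hd : Disjoint S₁ S₂) (ha : a ∈ S₁)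
    (hb : b ∈ S₁) : composeRel S₁ S₂ E₁ E₂ p q a b ↔ E₁ a b := by
  refine ⟨fun hab => hab.resolve_right ?_, .inl⟩
  rintro (hab | ⟨-, -, hb'⟩ | ⟨-, ha', -⟩)
  · exact Set.disjoint_left.1 hd ha (h₂.mem_of_adj hab).1
  · exact Set.disjoint_left.1 hd hb hb'
  · exact Set.disjoint_left.1 hd ha ha'

theorem composeRel_iff_right (h₁ : IsDicograph S₁ E₁) (hd : Disjoint S₁ S₂) (ha : a ∈ S₂)
    (hb : b ∈ S₂) : composeRel S₁ S₂ E₁ E₂ p q a b ↔ E₂ a b := by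
  rw [composeRel_comm]
  exact composeRel_iff_left h₁ hd.symm ha hb

theorem composeRel_iff_cross₁₂ (h₁ : IsDicograph S₁ E₁) (h₂ : IsDicograph S₂ E₂)
    (hd : Disjoint S₁ S₂) (ha : a ∈ S₁) (hb : b ∈ S₂) : composeRel S₁ S₂ E₁ E₂ p q a b ↔ p := by
  refine ⟨?_, fun hp => .inr (.inr (.inl ⟨hp, ha, hb⟩))⟩
  rintro (hab | hab | ⟨hp, -⟩ | ⟨-, ha', -⟩)
  · exact (Set.disjoint_left.1 hd (h₁.mem_of_adj hab).2 hb).elim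
  · exact (Set.disjoint_left.1 hd ha (h₂.mem_of_adj hab).1).elim
  · exact hp
  · exact (Set.disjoint_left.1 hd ha ha').elim

theorem composeRel_iff_cross₂₁ (h₁ : IsDicograph S₁ E₁) (h₂ : IsDicograph S₂ E₂)
    (hd : Disjoint S₁ S₂) (ha : a ∈ S₂) (hb : b ∈ S₁) : composeRel S₁ S₂ E₁ E₂ p q a b ↔ q := by
  rw [composeRel_comm]
  exact composeRel_iff_cross₁₂ h₂ h₁ hd.symm ha hb

theorem reflTransGen_left_of_not_cross₁₂ (h₁ : IsDicograph S₁ E₁) (h₂ : IsDicograph S₂ E₂)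
    (hd : Disjoint S₁ S₂) (hp : ¬ p) (hab : ReflTransGen (composeRel S₁ S₂ E₁ E₂ p q) a b)
    (ha : a ∈ S₁) : ReflTransGen E₁ a b ∧ b ∈ S₁ := by
  refine hab.of_forall_mem (fun x hx y hxy => ?_) ha
  obtain ⟨-, hy | hy⟩ := mem_union_of_composeRel h₁.mem_of_adj h₂.mem_of_adj hxy
  · exact ⟨(composeRel_iff_left h₂ hd hx hy).1 hxy, hy⟩
  · exact (hp ((composeRel_iff_cross₁₂ h₁ h₂ hd hx hy).1 hxy)).elim

theorem reflTransGen_left_of_not_cross₂₁ (h₁ : IsDicograph S₁ E₁) (h₂ : IsDicograph S₂ E₂)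
    (hd : Disjoint S₁ S₂) (hq : ¬ q) (hab : ReflTransGen (composeRel S₁ S₂ E₁ E₂ p q) a b)
    (hb : b ∈ S₁) : ReflTransGen E₁ a b ∧ a ∈ S₁ := by
  have hinv : ∀ y ∈ S₁, ∀ x, composeRel S₁ S₂ E₁ E₂ p q x y → E₁ x y ∧ x ∈ S₁ := by
    intro y hy x hxy
    obtain ⟨hx | hx, -⟩ := mem_union_of_composeRel h₁.mem_of_adj h₂.mem_of_adj hxy
    · exact ⟨(composeRel_iff_left h₂ hd hx hy).1 hxy, hx⟩
    · exact (hq ((composeRel_iff_cross₂₁ h₁ h₂ hd hx hy).1 hxy)).elim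
  obtain ⟨hba, ha⟩ := (reflTransGen_swap.2 hab).of_forall_mem (r' := Function.swap E₁) hinv hb
  exact ⟨reflTransGen_swap.1 hba, ha⟩

theorem adj_or_adj_adj_composeRel_of_mem_left (h₁ : IsDicograph S₁ E₁) (h₂ : IsDicograph S₂ E₂)
    (hd : Disjoint S₁ S₂)
    (ih₁ : ∀ {a b}, ReflTransGen E₁ a b → a ≠ b → E₁ a b ∨ ∃ x, E₁ a x ∧ E₁ x b)
    (hab : ReflTransGen (composeRel S₁ S₂ E₁ E₂ p q) a b) (hne : a ≠ b) (ha : a ∈ S₁)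
    (hb : b ∈ S₁ ∪ S₂) :
    composeRel S₁ S₂ E₁ E₂ p q a b ∨
      ∃ x, composeRel S₁ S₂ E₁ E₂ p q a x ∧ composeRel S₁ S₂ E₁ E₂ p q x b := by
  rcases hb with hb | hb
  · by_cases hpq : p ∧ q
    · obtain ⟨x, hx⟩ := h₂.nonempty
      exact .inr ⟨x, (composeRel_iff_cross₁₂ h₁ h₂ hd ha hx).2 hpq.1,
        (composeRel_iff_cross₂₁ h₁ h₂ hd hx hb).2 hpq.2⟩
    · have hab₁ : ReflTransGen E₁ a b := by
        rcases not_and_or.1 hpq with hp | hq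
        · exact (reflTransGen_left_of_not_cross₁₂ h₁ h₂ hd hp hab ha).1
        · exact (reflTransGen_left_of_not_cross₂₁ h₁ h₂ hd hq hab hb).1
      exact (ih₁ hab₁ hne).imp .inl fun ⟨x, hax, hxb⟩ => ⟨x, .inl hax, .inl hxb⟩
  · by_cases hp : p
    · exact .inl ((composeRel_iff_cross₁₂ h₁ h₂ hd ha hb).2 hp)
    · exact (Set.disjoint_left.1 hd (reflTransGen_left_of_not_cross₁₂ h₁ h₂ hd hp hab ha).2 hb).elim

theorem adj_or_adj_adj (h : IsDicograph S E) (hab : ReflTransGen E a b) (hne : a ≠ b) :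
    E a b ∨ ∃ x, E a x ∧ E x b := by
  refine h.induction_on_composeRel
    (motive := fun _ E => ∀ {a b}, ReflTransGen E a b → a ≠ b → E a b ∨ ∃ x, E a x ∧ E x b)
    ?_ ?_ hab hne
  · intro v a b hab hne
    exact (hne (hab.cases_head.resolve_right fun ⟨_, h, _⟩ => h)).elim
  · intro S₁ S₂ E₁ E₂ p q _ h₁ h₂ hd ih₁ ih₂ a b hab hne
    have hmem {x y} : composeRel S₁ S₂ E₁ E₂ p q x y → x ∈ S₁ ∪ S₂ ∧ y ∈ S₁ ∪ S₂ :=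
      mem_union_of_composeRel h₁.mem_of_adj h₂.mem_of_adj
    obtain ⟨c, hac, -⟩ := hab.cases_head.resolve_left hne
    obtain ⟨c', -, hcb⟩ := hab.cases_tail.resolve_left hne.symm
    rcases (hmem hac).1 with ha | ha
    · exact adj_or_adj_adj_composeRel_of_mem_left h₁ h₂ hd ih₁ hab hne ha (hmem hcb).2
    · rw [composeRel_comm] at hab ⊢
      exact adj_or_adj_adj_composeRel_of_mem_left h₂ h₁ hd.symm ih₂ hab hne ha (hmem hcb).2.symm

theorem ddist_eq_two_of_not_adj (h : IsDicograph S E) (hab : Reaches E a b)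
    (hne : a ≠ b) (he : ¬ E a b) : ddist E a b = 2 := by
  obtain ⟨n, hn⟩ := hab
  obtain he' | ⟨x, hax, hxb⟩ := h.adj_or_adj_adj hn.reflTransGen hne
  · exact (he he').elim
  · exact ddist_eq_two hne he hax hxb

theorem not_adj_iff_adj_of_resolves (h : IsDicograph S E) {w u v : V} (hr : Resolves E w u v)
    (hwu : w ≠ u) (hwv : w ≠ v) : ¬ (E w u ↔ E w v) := by
  obtain ⟨hu, hv, hd⟩ := (hr.resolve_left hwu).resolve_left hwv
  intro hiff
  by_cases hwu' : E w u
  · exact hd ((ddist_eq_one hwu hwu').trans (ddist_eq_one hwv (hiff.1 hwu')).symm)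
  · exact hd ((h.ddist_eq_two_of_not_adj hu hwu hwu').trans
      (h.ddist_eq_two_of_not_adj hv hwv (mt hiff.2 hwu')).symm)

theorem not_forbiddenConfig (h : IsDicograph S E) {w₁ w₂ u₁ u₂ v : V} :
    ¬ ForbiddenConfig E w₁ w₂ u₁ u₂ v := by
  refine h.induction_on_composeRel
    (motive := fun _ E => ∀ {w₁ w₂ u₁ u₂ v}, ¬ ForbiddenConfig E w₁ w₂ u₁ u₂ v) ?_ ?_
  · exact fun _ _ _ _ _ _ hc => hc.1
  · intro S₁ S₂ E₁ E₂ p q hqp h₁ h₂ hd ih₁ ih₂ w₁ w₂ u₁ u₂ v hc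
    have hmem {x y} : composeRel S₁ S₂ E₁ E₂ p q x y → x ∈ S₁ ∪ S₂ ∧ y ∈ S₁ ∪ S₂ :=
      mem_union_of_composeRel h₁.mem_of_adj h₂.mem_of_adj
    rcases hc.mem_or_mem hqp (composeRel_iff_cross₁₂ h₁ h₂ hd) (composeRel_iff_cross₂₁ h₁ h₂ hd)
      (hmem hc.1).1 (hmem hc.2.1).1 (hmem hc.1).2 (hmem hc.2.2.2.1).2 (hmem hc.2.2.2.1).1
      with ⟨hw₁, hw₂, hu₁, hu₂, hv⟩ | ⟨hw₁, hw₂, hu₁, hu₂, hv⟩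
    · exact ih₁ (by simpa only [ForbiddenConfig, composeRel_iff_left h₂ hd, *] using hc)
    · exact ih₂ (by simpa only [ForbiddenConfig, composeRel_iff_right h₁ hd, *] using hc)

end IsDicograph

theorem stmt_11_general {V : Type u} {S U R : Set V} {E : V → V → Prop}
    (hG : IsDicograph S E)
    (hres : ResolvesSet E R U)
    {u₁ u₂ : V} (hu₁ : u₁ ∈ U) (h1v : OneVertex E R u₁)
    (hu₂ : u₂ ∈ U) (h2v : TwoVertex E R u₂) :
    ¬ ∃ v ∈ U, v ∉ R ∧ v ≠ u₁ ∧ v ≠ u₂ ∧ ¬ E v u₁ ∧ E v u₂ := by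
  rintro ⟨v, hv, hvR, hvu₁, hvu₂, hnvu₁, hvu₂E⟩
  obtain ⟨w₁, hw₁, hr₁⟩ := hres u₁ hu₁ v hv hvu₁.symm
  obtain ⟨w₂, hw₂, hr₂⟩ := hres u₂ hu₂ v hv hvu₂.symm
  have hw₁v : ¬ E w₁ v := fun h => hG.not_adj_iff_adj_of_resolves hr₁
    (ne_of_mem_of_not_mem hw₁ h1v.1) (ne_of_mem_of_not_mem hw₁ hvR) (iff_of_true (h1v.2 w₁ hw₁) h)
  have hw₂v : E w₂ v := by_contra fun h => hG.not_adj_iff_adj_of_resolves hr₂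
    (ne_of_mem_of_not_mem hw₂ h2v.1) (ne_of_mem_of_not_mem hw₂ hvR) (iff_of_false (h2v.2 w₂ hw₂) h)
  exact hG.not_forbiddenConfig ⟨h1v.2 w₁ hw₁, h1v.2 w₂ hw₂, hw₂v, hvu₂E, h2v.2 w₁ hw₁,
    h2v.2 w₂ hw₂, hw₁v, hnvu₁⟩

/-- In a strongly connected directed co-graph, if `R` resolves `U` and `U` has
a 1-vertex `u₁` and a 2-vertex `u₂` w.r.t. `R`, then no further vertex `v` of
`U` simultaneously destroys the 1-vertex and the 2-vertex, i.e. there is no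
`v ∈ U \ (R ∪ {u₁, u₂})` with `(v,u₁) ∉ E(G)` and `(v,u₂) ∈ E(G)`. -/
theorem stmt_11 {V : Type u} {S U R : Set V} {E : V → V → Prop}
    (hG : IsDicograph S E) (hsc : SConn E S)
    (hU : U ⊆ S) (hRU : R ⊆ U)
    (hres : ResolvesSet E R U)
    {u₁ u₂ : V} (hu₁ : u₁ ∈ U) (hu₁R : u₁ ∉ R) (h1v : OneVertex E R u₁)
    (hu₂ : u₂ ∈ U) (hu₂R : u₂ ∉ R) (h2v : TwoVertex E R u₂) :
    ¬ ∃ v ∈ U, v ∉ R ∧ v ≠ u₁ ∧ v ≠ u₂ ∧ ¬ E v u₁ ∧ E v u₂ :=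
  stmt_11_general hG hres hu₁ h1v hu₂ h2v
end
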